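/- arXiv:2504.05721 — 3 statements merged into one kernel-verified Lean document; each statement's English description precedes it below -/
import Mathlib

section
/- Let Σ be a finite graph with a nontrivial TF-morphism (α, β). Then for any finite graph Γ, the lexicographic product Γ[Σ] has a nontrivial TF-morphism, namely ((1,α),(1,β)). -/
def IsTF {V : Type*} (G : SimpleGraph V) (α β : Equiv.Perm V) : Prop :=
  ∀ u v : V, G.Adj u v → G.Adj (α u) (β v)

def IsTFS {V : Type*} (G : SimpleGraph V) (α β : Equiv.Perm V) : Prop :=
  (∀ u : V, G.Adj (α u) (β u)) ∧
    ∀ u v : V, G.Adj u v → G.Adj (α u) (β v) ∨ α u = β v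
def strongProd {V W : Type*} (G : SimpleGraph V) (H : SimpleGraph W) :
    SimpleGraph (V × W) where
  Adj p q := (p.1 = q.1 ∧ H.Adj p.2 q.2) ∨ (G.Adj p.1 q.1 ∧ H.Adj p.2 q.2) ∨
    (G.Adj p.1 q.1 ∧ p.2 = q.2)
  symm := by
    constructor
    rintro p q (⟨h1, h2⟩ | ⟨h1, h2⟩ | ⟨h1, h2⟩)
    · exact Or.inl ⟨h1.symm, h2.symm⟩
    · exact Or.inr (Or.inl ⟨h1.symm, h2.symm⟩)
    · exact Or.inr (Or.inr ⟨h1.symm, h2.symm⟩)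
  loopless := by
    constructor
    rintro p (⟨_, h2⟩ | ⟨h1, _⟩ | ⟨h1, _⟩)
    · exact H.loopless.irrefl _ h2
    · exact G.loopless.irrefl _ h1
    · exact G.loopless.irrefl _ h1

def semiStrongProd {V W : Type*} (G : SimpleGraph V) (H : SimpleGraph W) :
    SimpleGraph (V × W) where
  Adj p q := (G.Adj p.1 q.1 ∨ p.1 = q.1) ∧ H.Adj p.2 q.2
  symm := by
    constructor
    rintro p q ⟨h1 | h1, h2⟩
    · exact ⟨Or.inl h1.symm, h2.symm⟩
    · exact ⟨Or.inr h1.symm, h2.symm⟩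
  loopless := by
    constructor
    rintro p ⟨_, h2⟩
    exact H.loopless.irrefl _ h2

def lexProd {V W : Type*} (G : SimpleGraph V) (H : SimpleGraph W) :
    SimpleGraph (V × W) where
  Adj p q := G.Adj p.1 q.1 ∨ (p.1 = q.1 ∧ H.Adj p.2 q.2)
  symm := by
    constructor
    rintro p q (h | ⟨h1, h2⟩)
    · exact Or.inl h.symm
    · exact Or.inr ⟨h1.symm, h2.symm⟩
  loopless := by
    constructor
    rintro p (h | ⟨_, h2⟩)
    · exact G.loopless.irrefl _ h
    · exact H.loopless.irrefl _ h2

def directProd {V W : Type*} (G : SimpleGraph V) (H : SimpleGraph W) :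
    SimpleGraph (V × W) where
  Adj p q := G.Adj p.1 q.1 ∧ H.Adj p.2 q.2
  symm := by
    constructor
    rintro p q ⟨h1, h2⟩
    exact ⟨h1.symm, h2.symm⟩
  loopless := by
    constructor
    rintro p ⟨h1, _⟩
    exact G.loopless.irrefl _ h1

theorem Equiv.prodCongr_injective_right {V V' W W' : Type*} [Nonempty V] (e : V ≃ V') :
    Function.Injective (fun f : W ≃ W' => e.prodCongr f) := by
  intro f g hfg
  ext w
  simpa using congrArg (fun h : V × W ≃ V' × W' => (h (Classical.arbitrary V, w)).2) hfg

/-- Both maps must act on `V` by the same `σ`: edges inside a fibre `{a} × W` have to land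
inside a single fibre again. -/
theorem IsTF.lexProd {V W : Type*} {G : SimpleGraph V} {H : SimpleGraph W}
    {σ : Equiv.Perm V} {α β : Equiv.Perm W} (hσ : IsTF G σ σ) (hαβ : IsTF H α β) :
    IsTF (lexProd G H) (σ.prodCongr α) (σ.prodCongr β) := by
  rintro ⟨a, x⟩ ⟨b, y⟩ (hab | ⟨rfl, hxy⟩)
  · exact Or.inl (hσ a b hab)
  · exact Or.inr ⟨rfl, hαβ x y hxy⟩

theorem stmt9_general {V W : Type*} [Nonempty V]
    (G : SimpleGraph V) (H : SimpleGraph W)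
    (α β : Equiv.Perm W) (hTF : IsTF H α β) (hne : α ≠ β) :
    IsTF (lexProd G H) ((Equiv.refl V).prodCongr α) ((Equiv.refl V).prodCongr β) ∧
      (Equiv.refl V).prodCongr α ≠ (Equiv.refl V).prodCongr β :=
  ⟨IsTF.lexProd (fun _ _ h => h) hTF, (Equiv.refl V).prodCongr_injective_right.ne hne⟩

theorem stmt9 {V W : Type*} [Fintype V] [Fintype W] [Nonempty V]
    (G : SimpleGraph V) (H : SimpleGraph W)
    (α β : Equiv.Perm W) (hTF : IsTF H α β) (hne : α ≠ β) :
    IsTF (lexProd G H) ((Equiv.refl V).prodCongr α) ((Equiv.refl V).prodCongr β) ∧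
      (Equiv.refl V).prodCongr α ≠ (Equiv.refl V).prodCongr β :=
  stmt9_general G H α β hTF hne
end

section
/- Let Γ be a finite graph with a TFS-morphism (α, β), and let Σ be any finite graph. Then ((α,1),(β,1)) is a TFS-morphism of the strong product Γ ⊠ Σ. -/
/-! The strong product is the graph whose "adjacent or equal" relation is the product of the
"adjacent or equal" relations of the factors. A TFS-morphism sends "adjacent or equal" pairs
to "adjacent or equal" pairs (equal pairs to adjacent ones, by its first condition), and so
does the identity, so the pair acting on the first factor only does too. -/

theorem strongProd_adj_or_eq_iff {V W : Type*} (G : SimpleGraph V) (H : SimpleGraph W)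
    (p q : V × W) :
    (strongProd G H).Adj p q ∨ p = q ↔
      (G.Adj p.1 q.1 ∨ p.1 = q.1) ∧ (H.Adj p.2 q.2 ∨ p.2 = q.2) := by
  obtain rfl | hpq := eq_or_ne p q
  · simp
  · have hne := Prod.ext_iff.not.1 hpq
    simp only [strongProd, hpq, or_false]
    tauto

theorem IsTFS.adj_or_eq_of_adj_or_eq {V : Type*} {G : SimpleGraph V} {α β : Equiv.Perm V}
    (h : IsTFS G α β) {u v : V} (huv : G.Adj u v ∨ u = v) :
    G.Adj (α u) (β v) ∨ α u = β v := by
  rcases huv with hadj | rfl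
  · exact h.2 u v hadj
  · exact Or.inl (h.1 u)

theorem stmt12_general {V W : Type*}
    (G : SimpleGraph V) (H : SimpleGraph W)
    (α β : Equiv.Perm V) (h : IsTFS G α β) :
    IsTFS (strongProd G H) (α.prodCongr (Equiv.refl W)) (β.prodCongr (Equiv.refl W)) := by
  refine ⟨fun p => Or.inr (Or.inr ⟨h.1 p.1, rfl⟩), fun p q hpq => ?_⟩
  obtain ⟨hfst, hsnd⟩ := (strongProd_adj_or_eq_iff G H p q).1 (Or.inl hpq)
  exact (strongProd_adj_or_eq_iff G H _ _).2 ⟨h.adj_or_eq_of_adj_or_eq hfst, hsnd⟩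

theorem stmt12 {V W : Type*} [Fintype V] [Fintype W]
    (G : SimpleGraph V) (H : SimpleGraph W)
    (α β : Equiv.Perm V) (h : IsTFS G α β) :
    IsTFS (strongProd G H) (α.prodCongr (Equiv.refl W)) (β.prodCongr (Equiv.refl W)) :=
  stmt12_general G H α β h
end

section
/- Let Γ be a finite graph with a TFS-morphism (α, β), and let Σ be any finite graph. Then ((α,1),(β,1)) is a nontrivial TF-morphism of the semi-strong product Γ ⋉ Σ, provided Σ has at least one edge. -/
theorem IsTF.refl {V : Type*} (G : SimpleGraph V) : IsTF G (Equiv.refl V) (Equiv.refl V) :=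
  fun _ _ huv => huv

theorem IsTFS.apply_ne {V : Type*} {G : SimpleGraph V} {α β : Equiv.Perm V} (h : IsTFS G α β)
    (u : V) : α u ≠ β u :=
  (h.1 u).ne

theorem IsTFS.ne {V : Type*} [Nonempty V] {G : SimpleGraph V} {α β : Equiv.Perm V}
    (h : IsTFS G α β) : α ≠ β := by
  obtain ⟨u⟩ := ‹Nonempty V›
  intro hαβ
  exact h.apply_ne u (by rw [hαβ])

theorem IsTFS.isTF_semiStrongProd {V W : Type*} {G : SimpleGraph V} {H : SimpleGraph W}
    {α β : Equiv.Perm V} {κ τ : Equiv.Perm W} (h : IsTFS G α β) (hH : IsTF H κ τ) :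
    IsTF (semiStrongProd G H) (α.prodCongr κ) (β.prodCongr τ) := by
  rintro ⟨a, x⟩ ⟨b, y⟩ ⟨hab | rfl, hxy⟩
  · exact ⟨(h.2 a b hab).imp id id, hH x y hxy⟩
  · exact ⟨Or.inl (h.1 a), hH x y hxy⟩

theorem Equiv.Perm.prodCongr_ne_prodCongr_left {V W : Type*} [Nonempty W] {α β : Equiv.Perm V}
    (hαβ : α ≠ β) (κ : Equiv.Perm W) : α.prodCongr κ ≠ β.prodCongr κ := by
  obtain ⟨x⟩ := ‹Nonempty W›
  intro h
  refine hαβ (Equiv.ext fun a => ?_)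
  exact congrArg Prod.fst (Equiv.congr_fun h (a, x))

theorem stmt13_general {V W : Type*} [Nonempty V]
    (G : SimpleGraph V) (H : SimpleGraph W)
    (α β : Equiv.Perm V) (h : IsTFS G α β)
    (hedge : ∃ x y : W, H.Adj x y) :
    IsTF (semiStrongProd G H) (α.prodCongr (Equiv.refl W)) (β.prodCongr (Equiv.refl W)) ∧
      α.prodCongr (Equiv.refl W) ≠ β.prodCongr (Equiv.refl W) := by
  obtain ⟨x, -, -⟩ := hedge
  have : Nonempty W := ⟨x⟩
  exact ⟨h.isTF_semiStrongProd (IsTF.refl H), Equiv.Perm.prodCongr_ne_prodCongr_left h.ne _⟩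

theorem stmt13 {V W : Type*} [Fintype V] [Fintype W] [Nonempty V]
    (G : SimpleGraph V) (H : SimpleGraph W)
    (α β : Equiv.Perm V) (h : IsTFS G α β)
    (hedge : ∃ x y : W, H.Adj x y) :
    IsTF (semiStrongProd G H) (α.prodCongr (Equiv.refl W)) (β.prodCongr (Equiv.refl W)) ∧
      α.prodCongr (Equiv.refl W) ≠ β.prodCongr (Equiv.refl W) :=
  stmt13_general G H α β h hedge
end
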